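/- Let X = {x_0,...,x_m}. The multiplicative composition product c ⋆ d := d ⧢ (c ⟲ d) on ℝ^m⟨⟨X⟩⟩ is associative, i.e., (c ⋆ d) ⋆ e = c ⋆ (d ⋆ e) for all c, d, e ∈ ℝ^m⟨⟨X⟩⟩, and 1l := (𝟙,...,𝟙) satisfies c ⋆ 1l = c. -/
import Mathlib


open scoped BigOperators

namespace CFS

noncomputable section

/-- The alphabet `X = {x_0, x_1, ..., x_m}`: `none` encodes `x_0`, `some i` encodes `x_{i+1}`. -/
abbrev Letter (m : ℕ) := Option (Fin m)

/-- Words over the alphabet `X`. -/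
abbrev Word (m : ℕ) := List (Letter m)

/-- Formal power series `ℝ⟨⟨X⟩⟩`: coefficient functions on words. -/
abbrev FPS (m : ℕ) := Word m → ℝ

/-- Tuples of series `ℝ^ℓ⟨⟨X⟩⟩`. -/
abbrev FPST (m ℓ : ℕ) := Fin ℓ → FPS m

/-- The series `𝟙` (coefficient 1 at the empty word). -/
def unit (m : ℕ) : FPS m := fun w => if w = [] then 1 else 0

/-- The tuple `1l = (𝟙,...,𝟙)`. -/
def unitT (m ℓ : ℕ) : FPST m ℓ := fun _ => unit m

/-- Left concatenation of a series by the letter `x`. -/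
def lc {m : ℕ} (x : Letter m) (c : FPS m) : FPS m :=
  fun w => match w with
  | [] => 0
  | y :: u => if y = x then c u else 0

/-- The shuffle product `c ⧢ d`, given by the coefficientwise recursion dual to the
word recursion `(x u) ⧢ (y v) = x(u ⧢ (y v)) + y((x u) ⧢ v)`, `𝟙 ⧢ η = η ⧢ 𝟙 = η`:
left shifts act as derivations. -/
def sh {m : ℕ} : FPS m → FPS m → FPS m
  | c, d, [] => c [] * d []
  | c, d, x :: w => sh (fun u => c (x :: u)) d w + sh c (fun u => d (x :: u)) w

/-- Componentwise shuffle on tuples. -/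
def shT {m ℓ : ℕ} (c d : FPST m ℓ) : FPST m ℓ := fun i => sh (c i) (d i)

/-- A tuple is purely improper when each component has a nonzero constant coefficient. -/
def PurelyImproper {m ℓ : ℕ} (c : FPST m ℓ) : Prop := ∀ i, c i [] ≠ 0

/-- `η ⟲ d` on a word `η`. -/
def wmc {m : ℕ} (d : FPST m m) : Word m → FPS m
  | [] => unit m
  | none :: η => lc none (wmc d η)
  | some i :: η => lc (some i) (sh (d i) (wmc d η))

/-- Multiplicative mixed composition product `c ⟲ d := Σ_η c(η)(η ⟲ d)`.
Since `η ⟲ d` is supported on words of length `≥ |η|`, only words `η` of length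
`≤ |w|` contribute to the coefficient at `w`. -/
def mc {m : ℕ} (c : FPS m) (d : FPST m m) : FPS m :=
  fun w => ∑ k ∈ Finset.range (w.length + 1),
    ∑ η : Fin k → Letter m, c (List.ofFn η) * wmc d (List.ofFn η) w

/-- `⟲` on tuples (componentwise in the left argument). -/
def mcT {m ℓ : ℕ} (c : FPST m ℓ) (d : FPST m m) : FPST m ℓ := fun i => mc (c i) d

/-- `ψ_d(η)(𝟙)`, where `ψ_d(x'_0)(e) = x_0(𝟙 ⧢ e)` and `ψ_d(x'_i)(e) = x_0(d_i ⧢ e)`. -/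
def wcomp {m ℓ : ℕ} (d : FPST m ℓ) : Word ℓ → FPS m
  | [] => unit m
  | none :: η => lc none (sh (unit m) (wcomp d η))
  | some i :: η => lc none (sh (d i) (wcomp d η))

/-- Composition product `c ∘ d := Σ_η c(η) ψ_d(η)(𝟙)`; since `ψ_d(η)(𝟙)` is supported
on words of length `≥ |η|`, only `η` with `|η| ≤ |w|` contribute at `w`. -/
def comp {m ℓ : ℕ} (c : FPS ℓ) (d : FPST m ℓ) : FPS m :=
  fun w => ∑ k ∈ Finset.range (w.length + 1),
    ∑ η : Fin k → Letter ℓ, c (List.ofFn η) * wcomp d (List.ofFn η) w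

/-- `∘` componentwise in the left argument. -/
def compT {m ℓ q : ℕ} (c : FPST ℓ q) (d : FPST m ℓ) : FPST m q := fun i => comp (c i) d

/-- Multiplicative composition product `c ⋆ d := d ⧢ (c ⟲ d)`. -/
def star {m : ℕ} (c d : FPST m m) : FPST m m := fun i => sh (d i) (mc (c i) d)

/-- Iteration of `e ↦ c(𝟙)⁻¹ ⬝ (𝟙 − c' ⧢ e)` (with `c'` the proper part of `c`),
whose fixed point is the shuffle inverse of `c` when `c(𝟙) ≠ 0`. -/
def shInvAux {m : ℕ} (c : FPS m) : ℕ → FPS m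
  | 0 => fun _ => 0
  | n + 1 => fun w =>
      (c [])⁻¹ * (unit m w - sh (fun u => if u = [] then 0 else c u) (shInvAux c n) w)

/-- Shuffle inverse `c^{⧢-1}` (the coefficient at `w` stabilizes after `|w|+1` iterations). -/
def shInv {m : ℕ} (c : FPS m) : FPS m := fun w => shInvAux c (w.length + 1) w

/-- Componentwise shuffle inverse of a tuple. -/
def shInvT {m ℓ : ℕ} (c : FPST m ℓ) : FPST m ℓ := fun i => shInv (c i)

/-- Iteration of the strong contraction `e ↦ d^{⧢-1} ⟲ e`, whose fixed point is `d^{⋆-1}`. -/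
def starInvAux {m : ℕ} (d : FPST m m) : ℕ → FPST m m
  | 0 => fun _ _ => 0
  | n + 1 => mcT (shInvT d) (starInvAux d n)

/-- `⋆`-inverse `d^{⋆-1}` of a purely improper tuple. -/
def starInv {m : ℕ} (d : FPST m m) : FPST m m := fun i w => starInvAux d (w.length + 1) i w

/-- Multiplicative dynamic feedback product `c @̌ d := c ⟲ (d^{⧢-1} ∘ c)^{⋆-1}`. -/
def fb {m q : ℕ} (c : FPST m q) (d : FPST q m) : FPST m q :=
  mcT c (starInv (compT (shInvT d) c))

/-- Valuation: minimal length of a word in the support (`⊤` for the zero series). -/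
def val {m : ℕ} (c : FPS m) : ℕ∞ :=
  sInf ((fun w : Word m => (w.length : ℕ∞)) '' {w | c w ≠ 0})

/-- Valuation of a tuple: minimum over components. -/
def valT {m ℓ : ℕ} (c : FPST m ℓ) : ℕ∞ := ⨅ i, val (c i)

/-- `σ^v` for `v : ℕ∞`, with `σ^∞ = 0`; so `κ(a,b) = enpow σ (val (a-b))`. -/
def enpow (σ : ℝ) (v : ℕ∞) : ℝ := if v = ⊤ then 0 else σ ^ v.toNat

/-- The natural part `c_N`: restriction of `c` to words in the letter `x_0` only. -/
def natPart {m : ℕ} (c : FPS m) : FPS m :=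
  fun w => if ∀ x ∈ w, x = (none : Letter m) then c w else 0

/-- The forced part `c_F := c − c_N`. -/
def forcedPart {m : ℕ} (c : FPS m) : FPS m := fun w => c w - natPart c w

/-- `c` has (finite) class `r ≥ 1`: `supp(c_F) ⊆ x_0^{r-1}X^+` and `supp(c_F) ⊄ x_0^r X^+`. -/
def hasClassF {m : ℕ} (c : FPS m) (r : ℕ) : Prop :=
  1 ≤ r ∧
  (∀ w, forcedPart c w ≠ 0 → ∃ v, v ≠ [] ∧ w = List.replicate (r - 1) (none : Letter m) ++ v) ∧
  ¬ (∀ w, forcedPart c w ≠ 0 → ∃ v, v ≠ [] ∧ w = List.replicate r (none : Letter m) ++ v)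

/-- `𝒞(c) = r` for `r : ℕ∞`, with `𝒞(c) = ∞` iff `c_F = 0`. -/
def hasClass {m : ℕ} (c : FPS m) (r : ℕ∞) : Prop :=
  (r = ⊤ ∧ forcedPart c = fun _ => 0) ∨ ∃ n : ℕ, r = (n : ℕ∞) ∧ hasClassF c n

/-- `c` has relative degree `r`: `𝒞(c) = r` and `x_0^{r-1} x_1 ∈ supp(c_F)`. -/
def hasRelDeg (c : FPS 1) (r : ℕ) : Prop :=
  hasClassF c r ∧
  forcedPart c (List.replicate (r - 1) (none : Letter 1) ++ [some 0]) ≠ 0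

/-- `⟲` for single (SISO, `m = 1`) series. -/
def mc1 (c d : FPS 1) : FPS 1 := mc c (fun _ => d)

/-- The multiplicative dynamic feedback product for single (SISO) series. -/
def fb1 (c d : FPS 1) : FPS 1 :=
  mc c (starInv (compT (fun _ : Fin 1 => shInv d) (fun _ : Fin 1 => c)))

end

end CFS


namespace CFS
section
variable {m : ℕ}

lemma sh_nil (a b : FPS m) : sh a b [] = a [] * b [] := rfl

lemma sh_cons (a b : FPS m) (x : Letter m) (w : Word m) :
    sh a b (x :: w) = sh (fun u => a (x :: u)) b w + sh a (fun u => b (x :: u)) w := rfl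

lemma sh_comm (a b : FPS m) : ∀ w, sh a b w = sh b a w := by
  intro w
  induction w generalizing a b with
  | nil => simp [sh_nil, mul_comm]
  | cons x w ih => rw [sh_cons, sh_cons, ih (fun u => a (x :: u)) b, ih a (fun u => b (x :: u)), add_comm]

lemma sh_zero_left (b : FPS m) : ∀ w, sh (fun _ => (0:ℝ)) b w = 0 := by
  intro w
  induction w generalizing b with
  | nil => simp [sh_nil]
  | cons x w ih => rw [sh_cons]; simp only [ih]; ring

lemma sh_zero_right (a : FPS m) (w : Word m) : sh a (fun _ => (0:ℝ)) w = 0 := by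
  rw [sh_comm]; exact sh_zero_left a w

lemma sh_add_left (a₁ a₂ b : FPS m) : ∀ w, sh (fun u => a₁ u + a₂ u) b w = sh a₁ b w + sh a₂ b w := by
  intro w
  induction w generalizing a₁ a₂ b with
  | nil => simp [sh_nil]; ring
  | cons x w ih => simp only [sh_cons]; rw [ih, ih]; ring

lemma sh_add_right (a b₁ b₂ : FPS m) (w : Word m) :
    sh a (fun u => b₁ u + b₂ u) w = sh a b₁ w + sh a b₂ w := by
  rw [sh_comm, sh_add_left, sh_comm b₁, sh_comm b₂]

lemma sh_smul_right (r : ℝ) (a b : FPS m) : ∀ w, sh a (fun u => r * b u) w = r * sh a b w := by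
  intro w
  induction w generalizing a b with
  | nil => simp [sh_nil]; ring
  | cons x w ih => simp only [sh_cons]; rw [ih, ih]; ring

lemma sh_congr_right (a : FPS m) {b b' : FPS m} (w : Word m)
    (h : ∀ u : Word m, u.length ≤ w.length → b u = b' u) :
    sh a b w = sh a b' w := by
  induction w generalizing a b b' with
  | nil => rw [sh_nil, sh_nil, h [] (by simp)]
  | cons x w ih =>
    rw [sh_cons, sh_cons,
      ih _ (fun u hu => h u (by simpa using Nat.le_succ_of_le hu)),
      ih _ (fun u hu => h (x :: u) (by simpa using hu))]

lemma sh_sum_right {α : Type*} (s : Finset α) (a : FPS m) (f : α → FPS m) (w : Word m) :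
    sh a (fun u => ∑ j ∈ s, f j u) w = ∑ j ∈ s, sh a (f j) w := by
  induction s using Finset.cons_induction with
  | empty => simpa using sh_zero_right a w
  | cons j s hj ih =>
    simp only [Finset.sum_cons]
    rw [sh_add_right, ih]

lemma sh_unit_left (b : FPS m) : ∀ w, sh (unit m) b w = b w := by
  intro w
  induction w generalizing b with
  | nil => simp [sh_nil, unit]
  | cons x w ih =>
    rw [sh_cons]
    have h1 : (fun u => unit m (x :: u)) = fun _ => (0:ℝ) := by
      funext u; simp [unit]
    rw [h1, sh_zero_left, zero_add, ih]

lemma sh_assoc (a b c : FPS m) : ∀ w, sh (sh a b) c w = sh a (sh b c) w := by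
  intro w
  induction w generalizing a b c with
  | nil => simp [sh_nil, mul_assoc]
  | cons x w ih =>
    rw [sh_cons, sh_cons]
    have h1 : (fun u => sh a b (x :: u))
        = fun u => sh (fun v => a (x :: v)) b u + sh a (fun v => b (x :: v)) u := by
      funext u; rw [sh_cons]
    have h2 : (fun u => sh b c (x :: u))
        = fun u => sh (fun v => b (x :: v)) c u + sh b (fun v => c (x :: v)) u := by
      funext u; rw [sh_cons]
    rw [h1, h2, sh_add_left, sh_add_right, ih, ih, ih]
    ring

lemma sh_eq_zero_right (a b : FPS m) (w : Word m)
    (h : ∀ u : Word m, u.length ≤ w.length → b u = 0) : sh a b w = 0 := by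
  rw [sh_congr_right a w (b' := fun _ => 0) h]; exact sh_zero_right a w

lemma wmc_eq_zero (d : FPST m m) : ∀ (η : Word m) (w : Word m), w.length < η.length →
    wmc d η w = 0 := by
  intro η
  induction η with
  | nil => intro w hw; simp at hw
  | cons x η ih =>
    intro w hw
    match x, w with
    | none, [] => simp [wmc, lc]
    | none, y :: w =>
      simp only [wmc, lc]
      split
      · exact ih w (by simpa using hw)
      · rfl
    | some i, [] => simp [wmc, lc]
    | some i, y :: w =>
      simp only [List.length_cons] at hw
      simp only [wmc, lc]
      split
      · exact sh_eq_zero_right _ _ _ (fun u hu => ih u (by omega))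
      · rfl

lemma mc_eq_sum (c : FPS m) (d : FPST m m) (w : Word m) (N : ℕ) (hN : w.length + 1 ≤ N) :
    mc c d w = ∑ k ∈ Finset.range N,
      ∑ η : Fin k → Letter m, c (List.ofFn η) * wmc d (List.ofFn η) w := by
  rw [mc]
  refine Finset.sum_subset (by intro k hk; simp at hk ⊢; omega) ?_
  intro k hk hknot
  simp only [Finset.mem_range] at hk hknot
  refine Finset.sum_eq_zero fun η _ => ?_
  rw [wmc_eq_zero d _ _ (by simp; omega), mul_zero]

lemma mc_nil (c : FPS m) (d : FPST m m) : mc c d [] = c [] := by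
  rw [mc]
  simp [wmc, unit, List.ofFn_zero]

lemma ofFn_cons {k : ℕ} (x : Letter m) (t : Fin k → Letter m) :
    List.ofFn (Fin.cons x t) = x :: List.ofFn t := by
  rw [List.ofFn_succ]
  simp

lemma mc_cons (c : FPS m) (d : FPST m m) (y : Letter m) (w : Word m) :
    mc c d (y :: w) = ∑ k ∈ Finset.range (w.length + 1),
      ∑ x : Letter m, ∑ t : Fin k → Letter m,
        c (x :: List.ofFn t) * wmc d (x :: List.ofFn t) (y :: w) := by
  rw [mc]
  simp only [List.length_cons]
  rw [Finset.sum_range_succ']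
  have h0 : ∑ η : Fin 0 → Letter m, c (List.ofFn η) * wmc d (List.ofFn η) (y :: w) = 0 := by
    simp [wmc, unit]
  rw [h0, add_zero]
  refine Finset.sum_congr rfl fun k _ => ?_
  rw [← Equiv.sum_comp (Fin.consEquiv fun _ => Letter m)
    (fun η => c (List.ofFn η) * wmc d (List.ofFn η) (y :: w)), Fintype.sum_prod_type]
  refine Finset.sum_congr rfl fun x _ => Finset.sum_congr rfl fun t _ => ?_
  simp [Fin.consEquiv, ofFn_cons]

lemma mc_cons_none (c : FPS m) (d : FPST m m) (w : Word m) :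
    mc c d (none :: w) = mc (fun u => c (none :: u)) d w := by
  rw [mc_cons, mc]
  refine Finset.sum_congr rfl fun k _ => ?_
  rw [Fintype.sum_option]
  have h2 : ∑ j : Fin m, ∑ t : Fin k → Letter m,
      c (some j :: List.ofFn t) * wmc d (some j :: List.ofFn t) (none :: w) = 0 := by
    refine Finset.sum_eq_zero fun j _ => Finset.sum_eq_zero fun t _ => ?_
    simp [wmc, lc]
  rw [h2, add_zero]
  refine Finset.sum_congr rfl fun t _ => ?_
  simp [wmc, lc]

lemma mc_cons_some (c : FPS m) (d : FPST m m) (i : Fin m) (w : Word m) :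
    mc c d (some i :: w) = sh (d i) (mc (fun u => c (some i :: u)) d) w := by
  rw [mc_cons]
  have hcongr : sh (d i) (mc (fun u => c (some i :: u)) d) w
      = sh (d i) (fun u => ∑ k ∈ Finset.range (w.length + 1),
          ∑ t : Fin k → Letter m, c (some i :: List.ofFn t) * wmc d (List.ofFn t) u) w := by
    refine sh_congr_right _ _ fun u hu => ?_
    exact mc_eq_sum _ _ _ _ (by omega)
  rw [hcongr, sh_sum_right]
  refine Finset.sum_congr rfl fun k _ => ?_
  rw [sh_sum_right]
  rw [Fintype.sum_option]
  have h1 : ∑ t : Fin k → Letter m,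
      c (none :: List.ofFn t) * wmc d (none :: List.ofFn t) (some i :: w) = 0 := by
    refine Finset.sum_eq_zero fun t _ => ?_
    simp [wmc, lc]
  rw [h1, zero_add]
  have h2 : ∀ j : Fin m, ∑ t : Fin k → Letter m,
      c (some j :: List.ofFn t) * wmc d (some j :: List.ofFn t) (some i :: w)
      = if i = j then ∑ t : Fin k → Letter m,
          c (some i :: List.ofFn t) * sh (d i) (wmc d (List.ofFn t)) w else 0 := by
    intro j
    by_cases h : i = j
    · subst h
      simp only [if_pos rfl]
      refine Finset.sum_congr rfl fun t _ => ?_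
      simp [wmc, lc]
    · simp only [if_neg h]
      refine Finset.sum_eq_zero fun t _ => ?_
      have : some i ≠ some j := by simpa using h
      simp [wmc, lc, this]
  rw [Finset.sum_congr rfl (fun j _ => h2 j), Finset.sum_ite_eq]
  simp only [Finset.mem_univ, if_pos]
  refine Finset.sum_congr rfl fun t _ => ?_
  rw [sh_smul_right]

lemma mc_add_left (a b : FPS m) (d : FPST m m) (w : Word m) :
    mc (fun u => a u + b u) d w = mc a d w + mc b d w := by
  simp only [mc, add_mul, Finset.sum_add_distrib]

lemma mc_sh (d : FPST m m) : ∀ (n : ℕ) (a b : FPS m) (w : Word m), w.length ≤ n →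
    mc (sh a b) d w = sh (mc a d) (mc b d) w := by
  intro n
  induction n with
  | zero =>
    intro a b w hw
    have : w = [] := List.length_eq_zero_iff.mp (Nat.le_zero.mp hw)
    subst this
    rw [mc_nil, sh_nil, sh_nil, mc_nil, mc_nil]
  | succ n ih =>
    intro a b w hw
    match w with
    | [] => rw [mc_nil, sh_nil, sh_nil, mc_nil, mc_nil]
    | none :: w =>
      have hw' : w.length ≤ n := by simpa using hw
      rw [mc_cons_none]
      have h1 : (fun u => sh a b (none :: u))
          = fun u => sh (fun v => a (none :: v)) b u + sh a (fun v => b (none :: v)) u := by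
        funext u; rw [sh_cons]
      rw [h1, mc_add_left, ih _ _ _ hw', ih _ _ _ hw']
      rw [sh_cons]
      have h2 : (fun u => mc a d (none :: u)) = mc (fun v => a (none :: v)) d := by
        funext u; rw [mc_cons_none]
      have h3 : (fun u => mc b d (none :: u)) = mc (fun v => b (none :: v)) d := by
        funext u; rw [mc_cons_none]
      rw [h2, h3]
    | some i :: w =>
      have hw' : w.length ≤ n := by simpa using hw
      rw [mc_cons_some]
      have h1 : (fun u => sh a b (some i :: u))
          = fun u => sh (fun v => a (some i :: v)) b u + sh a (fun v => b (some i :: v)) u := by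
        funext u; rw [sh_cons]
      have h2 : mc (fun u => sh a b (some i :: u)) d
          = fun u => mc (sh (fun v => a (some i :: v)) b) d u
              + mc (sh a (fun v => b (some i :: v))) d u := by
        funext u; rw [h1, mc_add_left]
      rw [h2, sh_add_right]
      have h3 : sh (d i) (mc (sh (fun v => a (some i :: v)) b) d) w
          = sh (d i) (sh (mc (fun v => a (some i :: v)) d) (mc b d)) w := by
        refine sh_congr_right _ _ fun u hu => ih _ _ _ (by omega)
      have h4 : sh (d i) (mc (sh a (fun v => b (some i :: v))) d) w
          = sh (d i) (sh (mc a d) (mc (fun v => b (some i :: v)) d)) w := by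
        refine sh_congr_right _ _ fun u hu => ih _ _ _ (by omega)
      rw [h3, h4]
      rw [sh_cons]
      have h5 : (fun u => mc a d (some i :: u)) = sh (d i) (mc (fun v => a (some i :: v)) d) := by
        funext u; rw [mc_cons_some]
      have h6 : (fun u => mc b d (some i :: u)) = sh (d i) (mc (fun v => b (some i :: v)) d) := by
        funext u; rw [mc_cons_some]
      rw [h5, h6]
      -- LHS: sh (d i) (sh (mc a' d) (mc b d)) w + sh (d i) (sh (mc a d) (mc b' d)) w
      -- RHS: sh (sh (d i) (mc a' d)) (mc b d) w + sh (mc a d) (sh (d i) (mc b' d)) w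
      have e1 : sh (d i) (sh (mc (fun v => a (some i :: v)) d) (mc b d)) w
          = sh (sh (d i) (mc (fun v => a (some i :: v)) d)) (mc b d) w :=
        (sh_assoc _ _ _ w).symm
      have hco : sh (d i) (mc a d) = sh (mc a d) (d i) := funext (sh_comm _ _)
      have e2 : sh (d i) (sh (mc a d) (mc (fun v => b (some i :: v)) d)) w
          = sh (mc a d) (sh (d i) (mc (fun v => b (some i :: v)) d)) w := by
        rw [← sh_assoc, hco, sh_assoc]
      rw [e1, e2]

lemma mc_sh' (a b : FPS m) (d : FPST m m) (w : Word m) :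
    mc (sh a b) d w = sh (mc a d) (mc b d) w :=
  mc_sh d w.length a b w le_rfl

lemma mc_mc (d e : FPST m m) : ∀ (n : ℕ) (c : FPS m) (w : Word m), w.length ≤ n →
    mc (mc c d) e w = mc c (star d e) w := by
  intro n
  induction n with
  | zero =>
    intro c w hw
    have : w = [] := List.length_eq_zero_iff.mp (Nat.le_zero.mp hw)
    subst this
    rw [mc_nil, mc_nil, mc_nil]
  | succ n ih =>
    intro c w hw
    match w with
    | [] => rw [mc_nil, mc_nil, mc_nil]
    | none :: w =>
      have hw' : w.length ≤ n := by simpa using hw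
      rw [mc_cons_none, mc_cons_none]
      have h1 : (fun u => mc c d (none :: u)) = mc (fun v => c (none :: v)) d := by
        funext u; rw [mc_cons_none]
      rw [h1, ih _ _ hw']
    | some i :: w =>
      have hw' : w.length ≤ n := by simpa using hw
      rw [mc_cons_some, mc_cons_some]
      have h1 : (fun u => mc c d (some i :: u))
          = sh (d i) (mc (fun v => c (some i :: v)) d) := by
        funext u; rw [mc_cons_some]
      rw [h1]
      have h2 : mc (sh (d i) (mc (fun v => c (some i :: v)) d)) e
          = fun u => sh (mc (d i) e) (mc (mc (fun v => c (some i :: v)) d) e) u := by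
        funext u; rw [mc_sh']
      rw [h2]
      have h3 : sh (e i) (fun u => sh (mc (d i) e) (mc (mc (fun v => c (some i :: v)) d) e) u) w
          = sh (e i) (sh (mc (d i) e) (mc (fun v => c (some i :: v)) (star d e))) w := by
        refine sh_congr_right _ _ fun u hu => ?_
        have hb : sh (mc (d i) e) (mc (mc (fun v => c (some i :: v)) d) e) u
            = sh (mc (d i) e) (mc (fun v => c (some i :: v)) (star d e)) u := by
          refine sh_congr_right _ _ fun v hv => ih _ _ (by omega)
        exact hb
      rw [h3, ← sh_assoc]
      rfl

lemma mc_unit (c : FPS m) : ∀ w, mc c (unitT m m) w = c w := by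
  intro w
  induction w generalizing c with
  | nil => rw [mc_nil]
  | cons y w ih =>
    match y with
    | none => rw [mc_cons_none, ih]
    | some i =>
      rw [mc_cons_some]
      have : unitT m m i = unit m := rfl
      rw [this, sh_unit_left, ih]

theorem star_assoc_and_right_unit' (c d e : FPST m m) :
    star (star c d) e = star c (star d e) ∧ star c (unitT m m) = c := by
  constructor
  · funext i w
    show sh (e i) (mc (sh (d i) (mc (c i) d)) e) w
      = sh (star d e i) (mc (c i) (star d e)) w
    have h1 : mc (sh (d i) (mc (c i) d)) e
        = fun u => sh (mc (d i) e) (mc (mc (c i) d) e) u := by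
      funext u; rw [mc_sh']
    rw [h1]
    have h2 : sh (e i) (fun u => sh (mc (d i) e) (mc (mc (c i) d) e) u) w
        = sh (e i) (sh (mc (d i) e) (mc (c i) (star d e))) w := by
      refine sh_congr_right _ _ fun u hu => ?_
      refine sh_congr_right _ _ fun v hv => mc_mc d e v.length _ _ le_rfl
    rw [h2, ← sh_assoc]
    rfl
  · funext i w
    show sh (unitT m m i) (mc (c i) (unitT m m)) w = c i w
    have : unitT m m i = unit m := rfl
    rw [this, sh_unit_left, mc_unit]


end
end CFS

open CFS in
/-- The multiplicative composition product `c ⋆ d := d ⧢ (c ⟲ d)` on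
`ℝ^m⟨⟨X⟩⟩` is associative and `1l = (𝟙,...,𝟙)` is a right unit. -/
theorem star_assoc_and_right_unit (m : ℕ) (c d e : FPST m m) :
    star (star c d) e = star c (star d e) ∧ star c (unitT m m) = c :=
  star_assoc_and_right_unit' c d e
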